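/- arXiv:1305.1756 — 7 statements merged into one kernel-verified Lean document; each statement's English description precedes it below -/
import Mathlib

section
/- Let A ∈ ℂ^{n×n}, B ∈ ℂ^{n×m}, C ∈ ℂ^{p×n} with m = p. If the pair (A,C) is not observable, then there exists λ ∈ spectrum(A) such that for every D ∈ ℂ^{p×p}, λ is an eigenvalue of the square block matrix [[A,B],[C,D]]. -/
/-! A nonzero kernel vector `v` of `[λI − A; C]` is an eigenvector of `A` for `λ` with `C v = 0`.
Then `(v, 0)` is an eigenvector of `[[A, B], [C, D]]` for the same `λ`, whatever `B` and `D` are. -/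

open Matrix

/-- PBH controllability: `rank [λI − A, B] = n` for all `λ ∈ ℂ`. -/
def Controllable {n m : Type*} [Fintype n] [Fintype m] [DecidableEq n]
    (A : Matrix n n ℂ) (B : Matrix n m ℂ) : Prop :=
  ∀ lam : ℂ, (Matrix.fromCols (lam • (1 : Matrix n n ℂ) - A) B).rank = Fintype.card n

/-- PBH observability: `rank [λI − A; C] = n` for all `λ ∈ ℂ`. -/
def Observable {n p : Type*} [Fintype n] [Fintype p] [DecidableEq n]
    (A : Matrix n n ℂ) (C : Matrix p n ℂ) : Prop :=
  ∀ lam : ℂ, (Matrix.fromRows (lam • (1 : Matrix n n ℂ) - A) C).rank = Fintype.card n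

namespace Matrix

variable {K : Type*} [Field K]

theorem exists_mulVec_eq_zero_of_rank_ne_card {m n : Type*} [Fintype n] {M : Matrix m n K}
    (h : M.rank ≠ Fintype.card n) : ∃ v ≠ 0, M *ᵥ v = 0 := by
  by_contra! hinj
  refine h ?_
  have hker : LinearMap.ker M.mulVecLin = ⊥ :=
    ker_mulVecLin_eq_bot_iff.2 fun v hMv => by_contra fun hv => hinj v hv hMv
  have hrank_nullity := LinearMap.finrank_range_add_finrank_ker M.mulVecLin
  rwa [hker, finrank_bot, add_zero, Module.finrank_fintype_fun_eq_card] at hrank_nullity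

theorem mem_spectrum_of_mulVec_eq_smul {n : Type*} [Fintype n] [DecidableEq n]
    {M : Matrix n n K} {μ : K} {v : n → K} (hv : v ≠ 0) (hMv : M *ᵥ v = μ • v) :
    μ ∈ spectrum K M := by
  rw [← spectrum_toLin']
  exact (Module.End.hasEigenvalue_of_hasEigenvector
    ⟨Module.End.mem_eigenspace_iff.2 (by simpa using hMv), hv⟩).mem_spectrum

theorem fromBlocks_mulVec_sum_elim_zero {R l m n o : Type*} [NonUnitalNonAssocSemiring R]
    [Fintype l] [Fintype m] (A : Matrix n l R) (B : Matrix n m R) (C : Matrix o l R)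
    (D : Matrix o m R) (v : l → R) :
    fromBlocks A B C D *ᵥ Sum.elim v 0 = Sum.elim (A *ᵥ v) (C *ᵥ v) := by
  simp [fromBlocks_mulVec]

end Matrix

theorem exists_eigenvector_mem_ker_of_not_observable {n p : Type*} [Fintype n] [Fintype p]
    [DecidableEq n] {A : Matrix n n ℂ} {C : Matrix p n ℂ} (h : ¬ Observable A C) :
    ∃ lam : ℂ, ∃ v ≠ 0, A *ᵥ v = lam • v ∧ C *ᵥ v = 0 := by
  obtain ⟨lam, hrank⟩ := not_forall.1 h
  obtain ⟨v, hv, hMv⟩ := exists_mulVec_eq_zero_of_rank_ne_card hrank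
  rw [fromRows_mulVec, ← Sum.elim_zero_zero, Sum.elim_eq_iff] at hMv
  refine ⟨lam, v, hv, ?_, hMv.2⟩
  rw [sub_mulVec, sub_eq_zero, smul_mulVec, one_mulVec] at hMv
  exact hMv.1.symm

theorem not_observable_spectrum_intersect (n p : ℕ)
    (A : Matrix (Fin n) (Fin n) ℂ) (B : Matrix (Fin n) (Fin p) ℂ)
    (C : Matrix (Fin p) (Fin n) ℂ)
    (h : ¬ Observable A C) :
    ∃ lam ∈ spectrum ℂ A, ∀ D : Matrix (Fin p) (Fin p) ℂ,
      lam ∈ spectrum ℂ (Matrix.fromBlocks A B C D) := by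
  obtain ⟨lam, v, hv, hAv, hCv⟩ := exists_eigenvector_mem_ker_of_not_observable h
  refine ⟨lam, mem_spectrum_of_mulVec_eq_smul hv hAv, fun D => ?_⟩
  refine mem_spectrum_of_mulVec_eq_smul (v := Sum.elim v 0) ?_ ?_
  · exact fun h0 => hv (Sum.elim_eq_iff.1 (h0.trans Sum.elim_zero_zero.symm)).1
  · rw [fromBlocks_mulVec_sum_elim_zero, hAv, hCv]
    ext (i | i) <;> simp
end

section
/- Let A ∈ ℂ^{n×n}, B ∈ ℂ^{n×m}, C ∈ ℂ^{p×n} with m = p. If for every eigenvalue λ_j of A there exists D_j ∈ ℂ^{p×p} such that λ_j is not an eigenvalue of the block matrix [[A,B],[C,D_j]], then the pair (A,B) is controllable and the pair (A,C) is observable. -/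
open Matrix

/-!
If `λ` is not an eigenvalue of `A`, then `λI − A` is invertible and both PBH matrices
`[λI − A, B]` and `[λI − A; C]` trivially have full rank. If it is, choose `D` with
`λ ∉ σ([[A, B], [C, D]])`: then `[[λI − A, B], [C, λI − D]]` (which differs from
`λI − [[A, B], [C, D]]` only by conjugation with `diag(1, −1)`) is invertible, and the two PBH
matrices are its top block row and its left block column, so their rows, resp. columns, are
linearly independent.
-/

namespace Matrix

section BlockRank

variable {K n m : Type*} [Field K] [Fintype n] [Fintype m] [DecidableEq n] [DecidableEq m]
  {P : Matrix n n K} {Q : Matrix n m K} {R : Matrix m n K} {S : Matrix m m K}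

theorem rank_fromCols_of_isUnit_fromBlocks (h : IsUnit (fromBlocks P Q R S)) :
    (fromCols P Q).rank = Fintype.card n :=
  ((linearIndependent_rows_of_isUnit h).comp Sum.inl Sum.inl_injective).rank_matrix

theorem rank_fromRows_of_isUnit_fromBlocks (h : IsUnit (fromBlocks P Q R S)) :
    (fromRows P R).rank = Fintype.card n := by
  rw [← rank_transpose, transpose_fromRows]
  exact rank_fromCols_of_isUnit_fromBlocks (S := Sᵀ)
    (by rwa [← fromBlocks_transpose, isUnit_transpose])

theorem rank_fromCols_of_isUnit_left (hP : IsUnit P) : (fromCols P Q).rank = Fintype.card n :=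
  rank_fromCols_of_isUnit_fromBlocks (R := 0) (S := 1)
    (isUnit_fromBlocks_zero₂₁.mpr ⟨hP, isUnit_one⟩)

theorem rank_fromRows_of_isUnit_left (hP : IsUnit P) : (fromRows P R).rank = Fintype.card n :=
  rank_fromRows_of_isUnit_fromBlocks (Q := 0) (S := 1)
    (isUnit_fromBlocks_zero₁₂.mpr ⟨hP, isUnit_one⟩)

theorem isUnit_fromBlocks_neg_neg_iff :
    IsUnit (fromBlocks P (-Q) (-R) S) ↔ IsUnit (fromBlocks P Q R S) := by
  set J : Matrix (n ⊕ m) (n ⊕ m) K := fromBlocks 1 0 0 (-1)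
  have hJ : IsUnit J := isUnit_fromBlocks_zero₂₁.mpr ⟨isUnit_one, isUnit_one.neg⟩
  have hconj : fromBlocks P (-Q) (-R) S = J * fromBlocks P Q R S * J := by
    simp [J, fromBlocks_multiply]
  rw [hconj, IsUnit.mul_iff, IsUnit.mul_iff]
  tauto

end BlockRank

section Spectrum

variable {K n m : Type*} [Field K] [Fintype n] [Fintype m] [DecidableEq n] [DecidableEq m]

theorem notMem_spectrum_iff {A : Matrix n n K} {lam : K} :
    lam ∉ spectrum K A ↔ IsUnit (lam • 1 - A) := by
  rw [spectrum.notMem_iff, Algebra.algebraMap_eq_smul_one]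

theorem notMem_spectrum_fromBlocks_iff {A : Matrix n n K} {B : Matrix n m K}
    {C : Matrix m n K} {D : Matrix m m K} {lam : K} :
    lam ∉ spectrum K (fromBlocks A B C D) ↔
      IsUnit (fromBlocks (lam • 1 - A) B C (lam • 1 - D)) := by
  rw [notMem_spectrum_iff, ← isUnit_fromBlocks_neg_neg_iff, ← fromBlocks_one, fromBlocks_smul,
    sub_eq_add_neg, fromBlocks_neg, fromBlocks_add]
  simp [sub_eq_add_neg]

end Spectrum

end Matrix

theorem minimal_of_spectrum_avoidance (n p : ℕ)
    (A : Matrix (Fin n) (Fin n) ℂ) (B : Matrix (Fin n) (Fin p) ℂ)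
    (C : Matrix (Fin p) (Fin n) ℂ)
    (h : ∀ lam ∈ spectrum ℂ A, ∃ D : Matrix (Fin p) (Fin p) ℂ,
      lam ∉ spectrum ℂ (Matrix.fromBlocks A B C D)) :
    Controllable A B ∧ Observable A C := by
  have key : ∀ lam : ℂ, IsUnit (lam • 1 - A) ∨
      ∃ D : Matrix (Fin p) (Fin p) ℂ, IsUnit (fromBlocks (lam • 1 - A) B C (lam • 1 - D)) := by
    intro lam
    by_cases hlam : lam ∈ spectrum ℂ A
    · obtain ⟨D, hD⟩ := h lam hlam
      exact Or.inr ⟨D, notMem_spectrum_fromBlocks_iff.mp hD⟩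
    · exact Or.inl (notMem_spectrum_iff.mp hlam)
  refine ⟨fun lam => ?_, fun lam => ?_⟩ <;> rcases key lam with hA | ⟨D, hD⟩
  · exact rank_fromCols_of_isUnit_left hA
  · exact rank_fromCols_of_isUnit_fromBlocks hD
  · exact rank_fromRows_of_isUnit_left hA
  · exact rank_fromRows_of_isUnit_fromBlocks hD
end

section
/- Let A ∈ ℂ^{n×n}, B ∈ ℂ^{n×m}, C ∈ ℂ^{p×n}, and suppose (A,B) is controllable and (A,C) is observable. Then there exists K ∈ ℂ^{m×p} such that spectrum(A) ∩ spectrum(A + BKC) = ∅. -/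
open Matrix

/-! For a fixed `λ`, the PBH conditions say `range (λ - A) ⊔ range B = ⊤` and
`ker (λ - A) ⊓ ker C = ⊥`. Both are invariant under `M ↦ M + B F C`, and while `ker M ≠ ⊥` a
rank-one gain strictly shrinks `ker M`; so some gain makes `λ - A + B F C` invertible. Hence for
each of the finitely many eigenvalues `λ` of `A`, `det (λ - A + B X C)` is a nonzero polynomial in
the entries of `X`, and over the infinite field `ℂ` their product has a nonvanishing point. -/

namespace Matrix

section CommRing

variable {R : Type*} [CommRing R] {l n m p : Type*} [Fintype n]

lemma range_mulVecLin_fromCols [Fintype m] (M : Matrix l n R) (B : Matrix l m R) :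
    LinearMap.range (fromCols M B).mulVecLin
      = LinearMap.range M.mulVecLin ⊔ LinearMap.range B.mulVecLin := by
  have : (fromCols M B).mulVecLin = (M.mulVecLin.coprod B.mulVecLin).comp
      (LinearEquiv.sumArrowLequivProdArrow n m R R).toLinearMap := by
    ext v : 1
    simp [LinearEquiv.sumArrowLequivProdArrow, Equiv.sumArrowEquivProdArrow]
  rw [this, LinearMap.range_comp_of_range_eq_top _ (LinearEquiv.range _), LinearMap.range_coprod]

lemma ker_mulVecLin_fromRows (M : Matrix l n R) (C : Matrix p n R) :
    LinearMap.ker (fromRows M C).mulVecLin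
      = LinearMap.ker M.mulVecLin ⊓ LinearMap.ker C.mulVecLin := by
  have : (fromRows M C).mulVecLin =
      (LinearEquiv.sumArrowLequivProdArrow l p R R).symm.toLinearMap.comp
        (M.mulVecLin.prod C.mulVecLin) := by
    ext v : 1
    simp [LinearEquiv.sumArrowLequivProdArrow, Equiv.sumArrowEquivProdArrow]
  rw [this, LinearEquiv.ker_comp, LinearMap.ker_prod]

lemma range_add_mul_mul_le [Fintype m] [Fintype p] (M : Matrix l n R) (B : Matrix l m R)
    (F : Matrix m p R) (C : Matrix p n R) :
    LinearMap.range (M + B * F * C).mulVecLin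
      ≤ LinearMap.range M.mulVecLin ⊔ LinearMap.range B.mulVecLin := by
  rintro _ ⟨x, rfl⟩
  rw [mulVecLin_apply, add_mulVec, ← mulVec_mulVec, ← mulVec_mulVec]
  exact Submodule.add_mem_sup ⟨x, rfl⟩ ⟨F *ᵥ (C *ᵥ x), rfl⟩

lemma range_add_mul_mul_sup [Fintype m] [Fintype p] (M : Matrix l n R) (B : Matrix l m R)
    (F : Matrix m p R) (C : Matrix p n R) :
    LinearMap.range (M + B * F * C).mulVecLin ⊔ LinearMap.range B.mulVecLin
      = LinearMap.range M.mulVecLin ⊔ LinearMap.range B.mulVecLin := by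
  refine le_antisymm (sup_le (range_add_mul_mul_le M B F C) le_sup_right)
    (sup_le ?_ le_sup_right)
  simpa using range_add_mul_mul_le (M + B * F * C) B (-F) C

lemma ker_add_mul_mul_inf [Fintype m] [Fintype p] (M : Matrix l n R) (B : Matrix l m R)
    (F : Matrix m p R) (C : Matrix p n R) :
    LinearMap.ker (M + B * F * C).mulVecLin ⊓ LinearMap.ker C.mulVecLin
      = LinearMap.ker M.mulVecLin ⊓ LinearMap.ker C.mulVecLin := by
  ext x
  simp +contextual only [Submodule.mem_inf, LinearMap.mem_ker, mulVecLin_apply, add_mulVec,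
    ← mulVec_mulVec, mulVec_zero, add_zero, and_congr_left_iff, implies_true]

lemma mul_vecMulVec_mul_mulVec [Fintype m] [Fintype p] (B : Matrix n m R) (u : m → R)
    (c : p → R) (C : Matrix p n R) (x : n → R) :
    (B * vecMulVec u c * C) *ᵥ x = (c ⬝ᵥ (C *ᵥ x)) • (B *ᵥ u) := by
  rw [← mulVec_mulVec, ← mulVec_mulVec, vecMulVec_mulVec, op_smul_eq_smul, mulVec_smul]

end CommRing

section Field

variable {K : Type*} [Field K] {l n m p : Type*} [Fintype n]

lemma sup_range_eq_top_of_rank_fromCols [Fintype m] {M : Matrix n n K} {B : Matrix n m K}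
    (h : (fromCols M B).rank = Fintype.card n) :
    LinearMap.range M.mulVecLin ⊔ LinearMap.range B.mulVecLin = ⊤ := by
  rw [← range_mulVecLin_fromCols]
  exact Submodule.eq_top_of_finrank_eq (h.trans (Module.finrank_fintype_fun_eq_card K).symm)

lemma inf_ker_eq_bot_of_rank_fromRows {M : Matrix l n K} {C : Matrix p n K}
    (h : (fromRows M C).rank = Fintype.card n) :
    LinearMap.ker M.mulVecLin ⊓ LinearMap.ker C.mulVecLin = ⊥ := by
  rw [← ker_mulVecLin_fromRows, ← Submodule.finrank_eq_zero]
  have := (fromRows M C).mulVecLin.finrank_range_add_finrank_ker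
  rw [Module.finrank_fintype_fun_eq_card] at this
  have h' : Module.finrank K (LinearMap.range (fromRows M C).mulVecLin) = Fintype.card n := h
  omega

lemma exists_dotProduct_eq_one [Fintype p] {w : p → K} (hw : w ≠ 0) :
    ∃ c : p → K, c ⬝ᵥ w = 1 := by
  classical
  obtain ⟨j, hj⟩ := Function.ne_iff.mp hw
  exact ⟨Pi.single j (w j)⁻¹, by rw [single_dotProduct, inv_mul_cancel₀ hj]⟩

/-- If `v ∈ ker M` and `B u ∉ range M`, the gain `u cᵀ` with `c (C v) = 1` sends `v` to `B u`,
while `M x + c (C x) • B u = 0` still forces `M x = 0`. -/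
lemma exists_ker_add_mul_mul_lt [Fintype m] [Fintype p] {M : Matrix n n K}
    {B : Matrix n m K} {C : Matrix p n K}
    (hMB : LinearMap.range M.mulVecLin ⊔ LinearMap.range B.mulVecLin = ⊤)
    (hMC : LinearMap.ker M.mulVecLin ⊓ LinearMap.ker C.mulVecLin = ⊥)
    (hM : LinearMap.ker M.mulVecLin ≠ ⊥) :
    ∃ F : Matrix m p K,
      LinearMap.ker (M + B * F * C).mulVecLin < LinearMap.ker M.mulVecLin := by
  obtain ⟨v, hv, hv0⟩ := Submodule.exists_mem_ne_zero_of_ne_bot hM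
  have hCv : C *ᵥ v ≠ 0 := fun h ↦ hv0 <| by
    have : v ∈ LinearMap.ker M.mulVecLin ⊓ LinearMap.ker C.mulVecLin := ⟨hv, h⟩
    rwa [hMC] at this
  have hrange : LinearMap.range M.mulVecLin ≠ ⊤ := fun h ↦
    hM <| LinearMap.ker_eq_bot.mpr <|
      LinearMap.injective_iff_surjective.mpr (LinearMap.range_eq_top.mp h)
  obtain ⟨u, hu⟩ : ∃ u, B *ᵥ u ∉ LinearMap.range M.mulVecLin := by
    by_contra! h
    exact hrange (by rwa [sup_eq_left.mpr (by rintro _ ⟨u, rfl⟩; exact h u)] at hMB)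
  obtain ⟨c, hc⟩ := exists_dotProduct_eq_one hCv
  refine ⟨vecMulVec u c, lt_of_le_of_ne (fun x hx ↦ ?_) fun h ↦ hu ?_⟩
  · have hx : M *ᵥ x + (c ⬝ᵥ (C *ᵥ x)) • (B *ᵥ u) = 0 := by
      rwa [LinearMap.mem_ker, mulVecLin_apply, add_mulVec, mul_vecMulVec_mul_mulVec] at hx
    obtain hcx | hcx := eq_or_ne (c ⬝ᵥ (C *ᵥ x)) 0
    · simpa [hcx] using hx
    · refine absurd ⟨-(c ⬝ᵥ (C *ᵥ x))⁻¹ • x, ?_⟩ hu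
      rw [mulVecLin_apply, mulVec_smul, eq_neg_of_add_eq_zero_left hx, smul_neg, neg_smul,
        neg_neg, smul_smul, inv_mul_cancel₀ hcx, one_smul]
  · have hv' : v ∈ LinearMap.ker (M + B * vecMulVec u c * C).mulVecLin := h ▸ hv
    rw [LinearMap.mem_ker, mulVecLin_apply, add_mulVec, mul_vecMulVec_mul_mulVec, hc, one_smul,
      show M *ᵥ v = 0 from hv, zero_add] at hv'
    exact hv' ▸ Submodule.zero_mem _

theorem exists_ker_add_mul_mul_eq_bot [Fintype m] [Fintype p] {M : Matrix n n K}
    {B : Matrix n m K} {C : Matrix p n K}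
    (hMB : LinearMap.range M.mulVecLin ⊔ LinearMap.range B.mulVecLin = ⊤)
    (hMC : LinearMap.ker M.mulVecLin ⊓ LinearMap.ker C.mulVecLin = ⊥) :
    ∃ F : Matrix m p K, LinearMap.ker (M + B * F * C).mulVecLin = ⊥ := by
  induction hd : Module.finrank K (LinearMap.ker M.mulVecLin) using Nat.strong_induction_on
    generalizing M with
  | _ d ih =>
    by_cases hM : LinearMap.ker M.mulVecLin = ⊥
    · exact ⟨0, by simpa using hM⟩
    obtain ⟨F, hF⟩ := exists_ker_add_mul_mul_lt hMB hMC hM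
    obtain ⟨F', hF'⟩ := ih _ (hd ▸ Submodule.finrank_lt_finrank_of_lt hF)
      (by rwa [range_add_mul_mul_sup]) (by rwa [ker_add_mul_mul_inf]) rfl
    exact ⟨F + F', by rwa [Matrix.mul_add, Matrix.add_mul, ← add_assoc]⟩

theorem exists_det_add_mul_mul_ne_zero [DecidableEq n] [Fintype m] [Fintype p]
    {M : Matrix n n K} {B : Matrix n m K} {C : Matrix p n K}
    (hMB : LinearMap.range M.mulVecLin ⊔ LinearMap.range B.mulVecLin = ⊤)
    (hMC : LinearMap.ker M.mulVecLin ⊓ LinearMap.ker C.mulVecLin = ⊥) :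
    ∃ F : Matrix m p K, (M + B * F * C).det ≠ 0 := by
  obtain ⟨F, hF⟩ := exists_ker_add_mul_mul_eq_bot hMB hMC
  refine ⟨F, fun h ↦ ?_⟩
  obtain ⟨v, hv0, hv⟩ := exists_mulVec_eq_zero_iff.mpr h
  exact hv0 (ker_mulVecLin_eq_bot_iff.mp hF v hv)

end Field

section FeedbackDet

variable {R : Type*} [CommRing R] {n m p : Type*} [Fintype n] [DecidableEq n] [Fintype m]
  [Fintype p]

/-- `det (M + B X C)` as a polynomial in the entries of an indeterminate gain `X`. -/
noncomputable def feedbackDet (M : Matrix n n R) (B : Matrix n m R) (C : Matrix p n R) :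
    MvPolynomial (m × p) R :=
  let c : R →+* MvPolynomial (m × p) R := MvPolynomial.C
  (M.map c + B.map c * mvPolynomialX m p R * C.map c).det

lemma eval_feedbackDet (M : Matrix n n R) (B : Matrix n m R) (C : Matrix p n R)
    (F : Matrix m p R) :
    MvPolynomial.eval (fun q ↦ F q.1 q.2) (feedbackDet M B C) = (M + B * F * C).det := by
  have hX : (mvPolynomialX m p R).map (MvPolynomial.eval fun q ↦ F q.1 q.2) = F :=
    mvPolynomialX_map_eval₂ _ F
  rw [feedbackDet, RingHom.map_det, RingHom.mapMatrix_apply, Matrix.map_add _ (map_add _),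
    Matrix.map_mul, Matrix.map_mul, hX]
  simp [Matrix.map_map, Function.comp_def]

theorem exists_forall_det_add_mul_mul_ne_zero [IsDomain R] [Infinite R] {ι : Type*}
    (s : Finset ι) (M : ι → Matrix n n R) (B : Matrix n m R) (C : Matrix p n R)
    (h : ∀ i ∈ s, ∃ F : Matrix m p R, (M i + B * F * C).det ≠ 0) :
    ∃ F : Matrix m p R, ∀ i ∈ s, (M i + B * F * C).det ≠ 0 := by
  have hP : ∏ i ∈ s, feedbackDet (M i) B C ≠ 0 := Finset.prod_ne_zero_iff.mpr fun i hi h0 ↦ by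
    obtain ⟨F, hF⟩ := h i hi
    rw [← eval_feedbackDet, h0, map_zero] at hF
    exact hF rfl
  obtain ⟨κ, hκ⟩ : ∃ κ, MvPolynomial.eval κ (∏ i ∈ s, feedbackDet (M i) B C) ≠ 0 := by
    by_contra! h
    exact hP (MvPolynomial.funext fun κ ↦ by rw [h κ, map_zero])
  refine ⟨of fun i j ↦ κ (i, j), fun i hi ↦ ?_⟩
  rw [map_prod] at hκ
  rw [← eval_feedbackDet]
  exact Finset.prod_ne_zero_iff.mp hκ i hi

end FeedbackDet

end Matrix

lemma Controllable.sup_range_eq_top {n m : Type*} [Fintype n] [Fintype m] [DecidableEq n]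
    {A : Matrix n n ℂ} {B : Matrix n m ℂ} (h : Controllable A B) (lam : ℂ) :
    LinearMap.range (lam • (1 : Matrix n n ℂ) - A).mulVecLin ⊔ LinearMap.range B.mulVecLin = ⊤ :=
  sup_range_eq_top_of_rank_fromCols (h lam)

lemma Observable.inf_ker_eq_bot {n p : Type*} [Fintype n] [Fintype p] [DecidableEq n]
    {A : Matrix n n ℂ} {C : Matrix p n ℂ} (h : Observable A C) (lam : ℂ) :
    LinearMap.ker (lam • (1 : Matrix n n ℂ) - A).mulVecLin ⊓ LinearMap.ker C.mulVecLin = ⊥ :=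
  inf_ker_eq_bot_of_rank_fromRows (h lam)

theorem exists_static_output_feedback_moving_spectrum (n m p : ℕ)
    (A : Matrix (Fin n) (Fin n) ℂ) (B : Matrix (Fin n) (Fin m) ℂ)
    (C : Matrix (Fin p) (Fin n) ℂ)
    (hc : Controllable A B) (ho : Observable A C) :
    ∃ K : Matrix (Fin m) (Fin p) ℂ,
      spectrum ℂ A ∩ spectrum ℂ (A + B * K * C) = ∅ := by
  obtain ⟨F, hF⟩ := exists_forall_det_add_mul_mul_ne_zero A.finite_spectrum.toFinset
    (fun lam ↦ lam • 1 - A) B C fun lam _ ↦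
      exists_det_add_mul_mul_ne_zero (hc.sup_range_eq_top lam) (ho.inf_ker_eq_bot lam)
  refine ⟨-F, Set.eq_empty_of_forall_notMem fun lam ⟨hA, hAF⟩ ↦ hAF ?_⟩
  have hdet := hF lam (A.finite_spectrum.mem_toFinset.mpr hA)
  rw [spectrum.mem_resolventSet_iff, Algebra.algebraMap_eq_smul_one, Matrix.mul_neg,
    Matrix.neg_mul, sub_add_eq_sub_sub, sub_neg_eq_add]
  exact (isUnit_iff_isUnit_det _).mpr hdet.isUnit
end

section
/- Let L = [[A,B],[C,D]] be an (n+m)×(n+m) complex block matrix with A ∈ ℂ^{n×n}, and let ψ be a complex polynomial with block decomposition ψ(L) = [[Ã,B̃],[C̃,D̃]] (same block sizes). If the pair (A,C) is not observable, then the pair (Ã,C̃) is not observable; similarly if (A,B) is not controllable then (Ã,B̃) is not controllable. -/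
open Matrix

/-!
If `A v = λ v` and `C v = 0` with `v ≠ 0`, then `(v, 0)` is an eigenvector of `L`, hence of
`ψ(L)` with eigenvalue `ψ(λ)`; reading off the blocks of `ψ(L) (v, 0)` gives `Ã v = ψ(λ) v` and
`C̃ v = 0`, so `(Ã, C̃)` fails the PBH test at `ψ(λ)`. Controllability is the dual statement:
`(A, B)` is controllable iff `(Aᵀ, Bᵀ)` is observable, and `ψ(L)ᵀ = ψ(Lᵀ)`.
-/

open Polynomial

section General

variable {R : Type*} [CommRing R] {k l n m : Type*}

theorem Matrix.rank_eq_card_iff_forall_mulVec_eq_zero {K : Type*} [Field K] [Fintype n]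
    (M : Matrix l n K) : M.rank = Fintype.card n ↔ ∀ v : n → K, M *ᵥ v = 0 → v = 0 := by
  have rank_add_nullity := LinearMap.finrank_range_add_finrank_ker M.mulVecLin
  rw [Module.finrank_fintype_fun_eq_card] at rank_add_nullity
  rw [← ker_mulVecLin_eq_bot_iff, ← Submodule.finrank_eq_zero, Matrix.rank]
  omega

theorem Matrix.aeval_mulVec_of_mulVec_eq_smul [Fintype k] [DecidableEq k] {M : Matrix k k R}
    {v : k → R} {μ : R} (hv : M *ᵥ v = μ • v) (p : R[X]) : aeval M p *ᵥ v = p.eval μ • v := by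
  rw [← toLinAlgEquiv'_apply, ← aeval_algHom_apply]
  exact Module.End.aeval_apply_of_mem_apply_eq_smul hv

theorem Matrix.transpose_aeval [Fintype k] [DecidableEq k] (M : Matrix k k R) (p : R[X]) :
    (aeval M p)ᵀ = aeval Mᵀ p := by
  simp only [aeval_eq_sum_range, transpose_sum, transpose_smul, transpose_pow]

theorem Matrix.mulVec_sumElim_zero [Fintype n] [Fintype m] (P : Matrix (l ⊕ k) (n ⊕ m) R)
    (v : n → R) : P *ᵥ Sum.elim v 0 = Sum.elim (P.toBlocks₁₁ *ᵥ v) (P.toBlocks₂₁ *ᵥ v) := by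
  conv_lhs => rw [← fromBlocks_toBlocks P]
  simp [fromBlocks_mulVec]

end General

section PBH

variable {n m p : Type*} [Fintype n] [Fintype m] [Fintype p] [DecidableEq n] [DecidableEq m]

theorem not_observable_iff (A : Matrix n n ℂ) (C : Matrix p n ℂ) :
    ¬ Observable A C ↔ ∃ (μ : ℂ) (v : n → ℂ), v ≠ 0 ∧ A *ᵥ v = μ • v ∧ C *ᵥ v = 0 := by
  have pencil_mulVec_eq_zero (μ : ℂ) (v : n → ℂ) : (μ • 1 - A) *ᵥ v = 0 ↔ A *ᵥ v = μ • v := by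
    rw [sub_mulVec, smul_mulVec, one_mulVec, sub_eq_zero, eq_comm]
  simp only [Observable, rank_eq_card_iff_forall_mulVec_eq_zero, not_forall,
    fromRows_mulVec, ← Sum.elim_zero_zero, Sum.elim_eq_iff, pencil_mulVec_eq_zero]
  exact exists_congr fun μ => exists_congr fun v => by tauto

theorem controllable_iff_observable_transpose (A : Matrix n n ℂ) (B : Matrix n p ℂ) :
    Controllable A B ↔ Observable Aᵀ Bᵀ := by
  refine forall_congr' fun μ => ?_
  rw [← rank_transpose, transpose_fromCols, transpose_sub, transpose_smul, transpose_one]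

theorem not_observable_aeval_fromBlocks {A : Matrix n n ℂ} (B : Matrix n m ℂ) {C : Matrix m n ℂ}
    (D : Matrix m m ℂ) (hAC : ¬ Observable A C) (ψ : ℂ[X]) :
    ¬ Observable (aeval (fromBlocks A B C D) ψ).toBlocks₁₁
      (aeval (fromBlocks A B C D) ψ).toBlocks₂₁ := by
  obtain ⟨μ, v, hv, hAv, hCv⟩ := (not_observable_iff A C).1 hAC
  have smul_sumElim : ∀ c : ℂ, c • Sum.elim v (0 : m → ℂ) = Sum.elim (c • v) 0 := fun c => by
    ext (i | i) <;> simp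
  have hL : fromBlocks A B C D *ᵥ Sum.elim v 0 = μ • Sum.elim v 0 := by
    rw [mulVec_sumElim_zero, smul_sumElim, toBlocks_fromBlocks₁₁, toBlocks_fromBlocks₂₁, hAv, hCv]
  have hψL := aeval_mulVec_of_mulVec_eq_smul hL ψ
  rw [mulVec_sumElim_zero, smul_sumElim, Sum.elim_eq_iff] at hψL
  exact (not_observable_iff _ _).2 ⟨ψ.eval μ, v, hv, hψL⟩

theorem not_controllable_aeval_fromBlocks {A : Matrix n n ℂ} {B : Matrix n m ℂ} (C : Matrix m n ℂ)
    (D : Matrix m m ℂ) (hAB : ¬ Controllable A B) (ψ : ℂ[X]) :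
    ¬ Controllable (aeval (fromBlocks A B C D) ψ).toBlocks₁₁
      (aeval (fromBlocks A B C D) ψ).toBlocks₁₂ := by
  rw [controllable_iff_observable_transpose] at hAB ⊢
  have h := not_observable_aeval_fromBlocks Cᵀ Dᵀ hAB ψ
  -- the blocks of `ψ(L)ᵀ` are definitionally the transposed blocks of `ψ(L)`
  rwa [← fromBlocks_transpose, ← transpose_aeval] at h

end PBH

theorem not_minimal_poly (n m : ℕ)
    (A : Matrix (Fin n) (Fin n) ℂ) (B : Matrix (Fin n) (Fin m) ℂ)
    (C : Matrix (Fin m) (Fin n) ℂ) (D : Matrix (Fin m) (Fin m) ℂ)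
    (ψ : Polynomial ℂ) :
    (¬ Observable A C →
      ¬ Observable ((Polynomial.aeval (Matrix.fromBlocks A B C D) ψ).toBlocks₁₁)
        ((Polynomial.aeval (Matrix.fromBlocks A B C D) ψ).toBlocks₂₁)) ∧
    (¬ Controllable A B →
      ¬ Controllable ((Polynomial.aeval (Matrix.fromBlocks A B C D) ψ).toBlocks₁₁)
        ((Polynomial.aeval (Matrix.fromBlocks A B C D) ψ).toBlocks₁₂)) :=
  ⟨fun hAC => not_observable_aeval_fromBlocks B D hAC ψ,
    fun hAB => not_controllable_aeval_fromBlocks C D hAB ψ⟩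
end

section
/- Let L = [[A,B],[C,D]] be an (n+m)×(n+m) complex block matrix, ψ a complex polynomial, and write ψ(L) = [[Ã,B̃],[C̃,D̃]] with the same block sizes. If spectrum(Ã) ∩ spectrum(ψ(L)) = ∅, then the pair (Ã,B̃) is controllable and (Ã,C̃) is observable. -/
/-!
A left eigenvector `w` of `Ã` with `w B̃ = 0` extends by zero to the left eigenvector `(w, 0)` of
`ψ(L)` with the same eigenvalue, so a failure of the PBH rank test for `(Ã, B̃)` produces a common
eigenvalue of `Ã` and `ψ(L)`. Observability of `(Ã, C̃)` is controllability of `(Ãᵀ, C̃ᵀ)`, and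
`Ãᵀ, C̃ᵀ` are the corresponding blocks of `ψ(L)ᵀ`, which has the same spectrum as `ψ(L)`.
-/

open Matrix

namespace Matrix

theorem vecMul_fromBlocks_of_vecMul_eq_smul {R : Type*} [Semiring R] {l m : Type*}
    [Fintype l] [Fintype m] {A : Matrix l l R} {B : Matrix l m R} {C : Matrix m l R}
    {D : Matrix m m R} {w : l → R} {μ : R} (hA : w ᵥ* A = μ • w) (hB : w ᵥ* B = 0) :
    Sum.elim w 0 ᵥ* fromBlocks A B C D = μ • Sum.elim w 0 := by
  ext (i | i) <;> simp [vecMul_fromBlocks, hA, hB]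

variable {K : Type*} [Field K] {m n : Type*} [Fintype m] [Fintype n]

theorem rank_eq_card_of_forall_vecMul_eq_zero {M : Matrix m n K}
    (h : ∀ w, w ᵥ* M = 0 → w = 0) : M.rank = Fintype.card m :=
  (vecMul_injective_iff.1 <| (injective_iff_map_eq_zero M.vecMulLinear).2 h).rank_matrix

theorem mem_spectrum_of_vecMul_eq_smul [DecidableEq m] {M : Matrix m m K} {w : m → K} {μ : K}
    (hw : w ≠ 0) (h : w ᵥ* M = μ • w) : μ ∈ spectrum K M := by
  rw [spectrum.mem_iff, Algebra.algebraMap_eq_smul_one, ← vecMul_injective_iff_isUnit]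
  intro hinj
  refine hw (hinj (?_ : w ᵥ* (μ • 1 - M) = 0 ᵥ* (μ • 1 - M)))
  rw [vecMul_sub, vecMul_smul, vecMul_one, h, sub_self, zero_vecMul]

theorem spectrum_transpose [DecidableEq m] (M : Matrix m m K) : spectrum K Mᵀ = spectrum K M := by
  ext μ
  simp only [mem_spectrum_iff_isRoot_charpoly, charpoly_transpose]

end Matrix

section

variable {m n : Type*} [Fintype m] [Fintype n] [DecidableEq m]

theorem observable_iff_controllable_transpose {A : Matrix m m ℂ} {C : Matrix n m ℂ} :
    Observable A C ↔ Controllable Aᵀ Cᵀ := by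
  refine forall_congr' fun μ => ?_
  rw [← rank_transpose, transpose_fromRows, transpose_sub, transpose_smul, transpose_one]

variable [DecidableEq n]

theorem controllable_toBlocks_of_disjoint_spectrum {L : Matrix (m ⊕ n) (m ⊕ n) ℂ}
    (h : Disjoint (spectrum ℂ L.toBlocks₁₁) (spectrum ℂ L)) :
    Controllable L.toBlocks₁₁ L.toBlocks₁₂ := by
  intro μ
  refine rank_eq_card_of_forall_vecMul_eq_zero fun w hw => ?_
  rw [vecMul_fromCols, ← Sum.elim_zero_zero, Sum.elim_eq_iff, vecMul_sub, vecMul_smul, vecMul_one,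
    sub_eq_zero] at hw
  obtain ⟨hA, hB⟩ := hw
  by_contra hw0
  have hL : Sum.elim w 0 ᵥ* L = μ • Sum.elim w 0 := by
    rw [← fromBlocks_toBlocks L]
    exact vecMul_fromBlocks_of_vecMul_eq_smul hA.symm hB
  have hext : Sum.elim w (0 : n → ℂ) ≠ 0 := fun h0 =>
    hw0 (Sum.elim_eq_iff.1 (h0.trans Sum.elim_zero_zero.symm)).1
  exact h.ne_of_mem (mem_spectrum_of_vecMul_eq_smul hw0 hA.symm)
    (mem_spectrum_of_vecMul_eq_smul hext hL) rfl

theorem observable_toBlocks_of_disjoint_spectrum {L : Matrix (m ⊕ n) (m ⊕ n) ℂ}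
    (h : Disjoint (spectrum ℂ L.toBlocks₁₁) (spectrum ℂ L)) :
    Observable L.toBlocks₁₁ L.toBlocks₂₁ := by
  rw [observable_iff_controllable_transpose]
  exact controllable_toBlocks_of_disjoint_spectrum (L := Lᵀ)
    (show Disjoint (spectrum ℂ L.toBlocks₁₁ᵀ) (spectrum ℂ Lᵀ) by
      rwa [spectrum_transpose, spectrum_transpose])

end

theorem minimal_of_disjoint_spectra_poly (n m : ℕ)
    (A : Matrix (Fin n) (Fin n) ℂ) (B : Matrix (Fin n) (Fin m) ℂ)
    (C : Matrix (Fin m) (Fin n) ℂ) (D : Matrix (Fin m) (Fin m) ℂ)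
    (ψ : Polynomial ℂ)
    (h : spectrum ℂ ((Polynomial.aeval (Matrix.fromBlocks A B C D) ψ).toBlocks₁₁) ∩
      spectrum ℂ (Polynomial.aeval (Matrix.fromBlocks A B C D) ψ) = ∅) :
    Controllable ((Polynomial.aeval (Matrix.fromBlocks A B C D) ψ).toBlocks₁₁)
        ((Polynomial.aeval (Matrix.fromBlocks A B C D) ψ).toBlocks₁₂) ∧
      Observable ((Polynomial.aeval (Matrix.fromBlocks A B C D) ψ).toBlocks₁₁)
        ((Polynomial.aeval (Matrix.fromBlocks A B C D) ψ).toBlocks₂₁) := by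
  have hdisj := Set.disjoint_iff_inter_eq_empty.2 h
  exact ⟨controllable_toBlocks_of_disjoint_spectrum hdisj,
    observable_toBlocks_of_disjoint_spectrum hdisj⟩
end

section
/- Let A ∈ ℂ^{n×n} with largest geometric multiplicity α among its eigenvalues. Then there exists B ∈ ℂ^{n×α} such that the pair (A,B) is controllable. Consequently the minimal possible rank (and minimal column number) of a B making (A,B) controllable equals α. -/
/-!
By the PBH test, `(A, B)` is controllable iff for every `λ` the column space of `B` complements
the range of `λI - A`; this range is everything unless `λ` is an eigenvalue, and otherwise has
codimension the geometric multiplicity of `λ`. Hence `rank B ≥ α`. Conversely, a vector space over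
an infinite field is not a finite union of proper subspaces, so some vector lies outside every
proper range `λI - A`; adding it to all of them lowers every positive codimension by one, and
`α` such steps give the `α` columns of a controllable `B`.
-/

open Matrix

open Module Submodule

namespace Matrix

variable {R K m n₁ n₂ : Type*} [Fintype n₁] [Fintype n₂]

theorem range_mulVecLin_fromCols_s15 [CommSemiring R] (A₁ : Matrix m n₁ R) (A₂ : Matrix m n₂ R) :
    LinearMap.range (fromCols A₁ A₂).mulVecLin =
      LinearMap.range A₁.mulVecLin ⊔ LinearMap.range A₂.mulVecLin := by
  have hcol : (fromCols A₁ A₂).col = Sum.elim A₁.col A₂.col := by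
    ext (j | j) i <;> rfl
  simp only [range_mulVecLin, hcol, Set.Sum.elim_range, span_union]

variable [Field K]

theorem rank_eq_card_height_iff [Fintype m] {n : Type*} [Fintype n] (A : Matrix m n K) :
    A.rank = Fintype.card m ↔ LinearMap.range A.mulVecLin = ⊤ := by
  rw [eq_top_iff_finrank_eq, finrank_fintype_fun_eq_card]
  rfl

theorem rank_fromCols_le (A₁ : Matrix m n₁ K) (A₂ : Matrix m n₂ K) :
    (fromCols A₁ A₂).rank ≤ A₁.rank + A₂.rank := by
  rw [rank, range_mulVecLin_fromCols_s15]
  exact finrank_add_le_finrank_add_finrank _ _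

end Matrix

section AvoidingSubspaces

variable {K V ι : Type*} [Field K] [Infinite K] [AddCommGroup V] [Module K V] [Finite ι]

theorem Submodule.exists_forall_notMem_of_ne_top (p : ι → Submodule K V) :
    ∃ v : V, ∀ i, p i ≠ ⊤ → v ∉ p i := by
  have hcover : ⋃ i : {i // p i ≠ ⊤}, (p i : Set V) ≠ Set.univ := fun h ↦
    (Subspace.exists_eq_top_of_iUnion_eq_univ h).elim fun i hi ↦ i.2 hi
  obtain ⟨v, hv⟩ := Set.ne_univ_iff_exists_notMem _ |>.mp hcover
  simp only [Set.mem_iUnion, SetLike.mem_coe, not_exists] at hv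
  exact ⟨v, fun i hi ↦ hv ⟨i, hi⟩⟩

variable [FiniteDimensional K V]

theorem Submodule.exists_span_sup_eq_top (k : ℕ) (p : ι → Submodule K V)
    (hp : ∀ i, finrank K V - finrank K (p i) ≤ k) :
    ∃ v : Fin k → V, ∀ i, span K (Set.range v) ⊔ p i = ⊤ := by
  induction k generalizing p with
  | zero =>
    refine ⟨0, fun i ↦ ?_⟩
    have : p i = ⊤ := eq_top_iff_finrank_eq.mpr <| by
      have := (p i).finrank_le
      have := hp i
      omega
    simp [this]
  | succ k ih =>
    obtain ⟨v₀, hv₀⟩ := exists_forall_notMem_of_ne_top p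
    have hcodim : ∀ i, finrank K V - finrank K ↥(p i ⊔ span K {v₀}) ≤ k := by
      intro i
      by_cases hi : p i = ⊤
      · rw [hi, top_sup_eq, finrank_top, Nat.sub_self]
        exact k.zero_le
      · have hlt : p i < p i ⊔ span K {v₀} :=
          left_lt_sup.mpr fun h ↦ hv₀ i hi (h (mem_span_singleton_self v₀))
        have := finrank_lt_finrank_of_lt hlt
        have := hp i
        omega
    obtain ⟨v, hv⟩ := ih (fun i ↦ p i ⊔ span K {v₀}) hcodim
    refine ⟨Fin.cons v₀ v, fun i ↦ ?_⟩
    rw [Fin.range_cons, span_insert, ← hv i]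
    ac_rfl

end AvoidingSubspaces

section Controllability

variable {n m : Type*} [Fintype n] [Fintype m] [DecidableEq n] {A : Matrix n n ℂ}

theorem controllable_iff_range_sup_eq_top (B : Matrix n m ℂ) :
    Controllable A B ↔ ∀ lam : ℂ, LinearMap.range (lam • (1 : Matrix n n ℂ) - A).mulVecLin ⊔
      LinearMap.range B.mulVecLin = ⊤ := by
  simp only [Controllable, rank_eq_card_height_iff, range_mulVecLin_fromCols_s15]

theorem range_mulVecLin_smul_one_sub_eq_top {lam : ℂ} (h : lam ∉ spectrum ℂ A) :
    LinearMap.range (lam • (1 : Matrix n n ℂ) - A).mulVecLin = ⊤ := by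
  rw [spectrum.notMem_iff, Algebra.algebraMap_eq_smul_one] at h
  rw [← rank_eq_card_height_iff, rank_of_isUnit _ h]

theorem Controllable.card_sub_rank_le_rank {B : Matrix n m ℂ} (hAB : Controllable A B) (μ : ℂ) :
    Fintype.card n - (μ • (1 : Matrix n n ℂ) - A).rank ≤ B.rank := by
  have := hAB μ ▸ rank_fromCols_le (μ • (1 : Matrix n n ℂ) - A) B
  omega

theorem exists_controllable_of_card_sub_rank_le (k : ℕ)
    (hk : ∀ μ ∈ spectrum ℂ A, Fintype.card n - (μ • (1 : Matrix n n ℂ) - A).rank ≤ k) :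
    ∃ B : Matrix n (Fin k) ℂ, Controllable A B := by
  have hcodim (μ : spectrum ℂ A) : finrank ℂ (n → ℂ) -
      finrank ℂ (LinearMap.range (μ.1 • (1 : Matrix n n ℂ) - A).mulVecLin) ≤ k := by
    rw [finrank_fintype_fun_eq_card]
    exact hk μ μ.2
  obtain ⟨v, hv⟩ := exists_span_sup_eq_top k _ hcodim
  refine ⟨of fun i j ↦ v j i, (controllable_iff_range_sup_eq_top _).mpr fun lam ↦ ?_⟩
  by_cases hlam : lam ∈ spectrum ℂ A
  · rw [sup_comm, range_mulVecLin]
    exact hv ⟨lam, hlam⟩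
  · rw [range_mulVecLin_smul_one_sub_eq_top hlam, top_sup_eq]

end Controllability

theorem minimal_rank_controllable_eq_alpha (n : ℕ)
    (A : Matrix (Fin n) (Fin n) ℂ) (α : ℕ)
    (hub : ∀ μ ∈ spectrum ℂ A, n - (μ • (1 : Matrix (Fin n) (Fin n) ℂ) - A).rank ≤ α)
    (hmax : ∃ μ ∈ spectrum ℂ A, n - (μ • (1 : Matrix (Fin n) (Fin n) ℂ) - A).rank = α) :
    (∃ B : Matrix (Fin n) (Fin α) ℂ, Controllable A B) ∧
      (∀ (m : ℕ) (B : Matrix (Fin n) (Fin m) ℂ), Controllable A B → α ≤ B.rank) := by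
  refine ⟨exists_controllable_of_card_sub_rank_le α (by simpa only [Fintype.card_fin] using hub),
    fun m B hAB ↦ ?_⟩
  obtain ⟨μ, -, rfl⟩ := hmax
  simpa only [Fintype.card_fin] using hAB.card_sub_rank_le_rank μ
end

section
/- Let L = [[A,B],[C,D]] ∈ ℂ^{(n+m)×(n+m)} be invertible, and write L^{-1} = [[A',B'],[C',D']] with the same block sizes. If the pair (A,C) is not observable, then the pair (A',C') is not observable. -/
open Matrix

/-!
The PBH test says that `(A, C)` is unobservable exactly when some eigenvector `v` of `A` lies in
`ker C`, i.e. when `(v; 0)` is an eigenvector of `L = [[A, B], [C, D]]`. An eigenvector of the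
invertible matrix `L` is an eigenvector of `L⁻¹` (for the inverse eigenvalue), so `(v; 0)` is one
for `L⁻¹`, and reading off its blocks shows that `v` witnesses the unobservability of `(A', C')`.
-/

namespace Matrix

theorem rank_eq_card_iff_mulVec_eq_zero {K m n : Type*} [Field K] [Fintype n]
    (M : Matrix m n K) : M.rank = Fintype.card n ↔ ∀ v, M *ᵥ v = 0 → v = 0 := by
  have h := LinearMap.finrank_range_add_finrank_ker M.mulVecLin
  rw [Module.finrank_fintype_fun_eq_card] at h
  rw [rank, ← ker_mulVecLin_eq_bot_iff, ← Submodule.finrank_eq_zero]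
  omega

theorem fromRows_sub_mulVec_eq_zero_iff {K n p : Type*} [CommRing K] [Fintype n]
    [DecidableEq n]
    (A : Matrix n n K) (C : Matrix p n K) (lam : K) (v : n → K) :
    fromRows (lam • (1 : Matrix n n K) - A) C *ᵥ v = 0 ↔
      A *ᵥ v = lam • v ∧ C *ᵥ v = 0 := by
  rw [fromRows_mulVec, ← Sum.elim_zero_zero, Sum.elim_eq_iff, sub_mulVec, smul_mulVec,
    one_mulVec, sub_eq_zero, eq_comm]

theorem fromBlocks_mulVec_sumElim_zero_eq_smul_iff {m n α : Type*} [Fintype m] [Fintype n]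
    [CommRing α] (A : Matrix n n α) (B : Matrix n m α) (C : Matrix m n α) (D : Matrix m m α)
    (v : n → α) (lam : α) :
    fromBlocks A B C D *ᵥ Sum.elim v 0 = lam • Sum.elim v 0 ↔
      A *ᵥ v = lam • v ∧ C *ᵥ v = 0 := by
  simp only [fromBlocks_mulVec, Sum.elim_comp_inl, Sum.elim_comp_inr, mulVec_zero, add_zero,
    funext_iff, Sum.forall, Sum.elim_inl, Sum.elim_inr, Pi.smul_apply, Pi.zero_apply, smul_zero]

theorem inv_mulVec_eq_inv_smul_of_mulVec_eq_smul {K n : Type*} [Field K] [Fintype n]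
    [DecidableEq n] {L : Matrix n n K} (hL : IsUnit L) {lam : K} {x : n → K} (hx : x ≠ 0)
    (hLx : L *ᵥ x = lam • x) : L⁻¹ *ᵥ x = lam⁻¹ • x := by
  have hx' : x = lam • (L⁻¹ *ᵥ x) := by
    rw [← mulVec_smul, ← hLx, mulVec_mulVec,
      nonsing_inv_mul L ((isUnit_iff_isUnit_det L).mp hL), one_mulVec]
  have hlam : lam ≠ 0 := by
    rintro rfl
    exact hx (by simpa using hx')
  rw [eq_inv_smul_iff₀ hlam]
  exact hx'.symm

end Matrix

theorem not_observable_iff_exists_eigenvector_mem_ker {n p : Type*} [Fintype n] [Fintype p]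
    [DecidableEq n] (A : Matrix n n ℂ) (C : Matrix p n ℂ) :
    ¬ Observable A C ↔
      ∃ lam : ℂ, ∃ v, v ≠ 0 ∧ A *ᵥ v = lam • v ∧ C *ᵥ v = 0 := by
  simp only [Observable, rank_eq_card_iff_mulVec_eq_zero, fromRows_sub_mulVec_eq_zero_iff]
  push Not
  exact exists_congr fun _ => exists_congr fun _ => and_comm

theorem not_observable_inverse (n m : ℕ)
    (A : Matrix (Fin n) (Fin n) ℂ) (B : Matrix (Fin n) (Fin m) ℂ)
    (C : Matrix (Fin m) (Fin n) ℂ) (D : Matrix (Fin m) (Fin m) ℂ)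
    (hL : IsUnit (Matrix.fromBlocks A B C D))
    (h : ¬ Observable A C) :
    ¬ Observable ((Matrix.fromBlocks A B C D)⁻¹.toBlocks₁₁)
      ((Matrix.fromBlocks A B C D)⁻¹.toBlocks₂₁) := by
  rw [not_observable_iff_exists_eigenvector_mem_ker] at h ⊢
  obtain ⟨lam, v, hv, hAv, hCv⟩ := h
  have hx : Sum.elim v (0 : Fin m → ℂ) ≠ 0 := fun hx =>
    hv (funext fun i => congrFun hx (.inl i))
  have hLx := (fromBlocks_mulVec_sumElim_zero_eq_smul_iff A B C D v lam).2 ⟨hAv, hCv⟩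
  have hLinvx := inv_mulVec_eq_inv_smul_of_mulVec_eq_smul hL hx hLx
  rw [← fromBlocks_toBlocks (fromBlocks A B C D)⁻¹,
    fromBlocks_mulVec_sumElim_zero_eq_smul_iff] at hLinvx
  exact ⟨lam⁻¹, v, hv, hLinvx⟩
end
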